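/- arXiv:1003.3820 — 2 statements merged into one kernel-verified Lean document; each statement's English description precedes it below -/
import Mathlib

section
/- Let G be a double groupoid satisfying the filling condition and a an object of G. On the set G(a) of pairs (g,u) with g a horizontal morphism, u a vertical morphism, t^h(g) = a = s^v(u) and s^h(g) = t^v(u), the relation (g,u) ~ (g',u') defined by the existence of two squares α, α' with t^h(α) = t^h(α'), s^v(α) = s^v(α'), s^h(α) = u, s^h(α') = u', t^v(α) = g, t^v(α') = g', is an equivalence relation. -/
/-! ## Double categories and double groupoids (combinatorial formalization)

A double category is given by objects, horizontal morphisms `H a b` (from `a` to `b`),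
vertical morphisms `V a b`, and squares `Sq f g u w` where `f : H a c` is the bottom
(vertical-source) edge, `g : H b d` the top (vertical-target) edge, `u : V a b` the
horizontal-source edge and `w : V c d` the horizontal-target edge. -/

universe u₁ u₂ u₃ u₄

/-- The operations of a (small) double category: the four compositions and identities. -/
structure DCS (Ob : Type u₁) (H : Ob → Ob → Type u₂) (V : Ob → Ob → Type u₃)
    (Sq : ∀ ⦃a b c d : Ob⦄, H a c → H b d → V a b → V c d → Type u₄) where
  hComp : ∀ {a b c : Ob}, H b c → H a b → H a c
  hId : ∀ a : Ob, H a a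
  vComp : ∀ {a b c : Ob}, V b c → V a b → V a c
  vId : ∀ a : Ob, V a a
  /-- horizontal composition of squares (along a common vertical edge) -/
  hCompSq : ∀ {a b c d a' b' : Ob} {f : H a c} {g : H b d} {u : V a b} {w : V c d}
    {f' : H a' a} {g' : H b' b} {u' : V a' b'},
    Sq f g u w → Sq f' g' u' u → Sq (hComp f f') (hComp g g') u' w
  /-- vertical composition of squares (along a common horizontal edge) -/
  vCompSq : ∀ {a b c d a₀ c₀ : Ob} {f : H a c} {g : H b d} {u : V a b} {w : V c d}
    {f₀ : H a₀ c₀} {u₀ : V a₀ a} {w₀ : V c₀ c},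
    Sq f g u w → Sq f₀ f u₀ w₀ → Sq f₀ g (vComp u u₀) (vComp w w₀)
  /-- the horizontal identity square `I^h u` on a vertical morphism -/
  idSqH : ∀ {a b : Ob} (u : V a b), Sq (hId a) (hId b) u u
  /-- the vertical identity square `I^v f` on a horizontal morphism -/
  idSqV : ∀ {a c : Ob} (f : H a c), Sq f f (vId a) (vId c)

/-- The operations of a double groupoid: a double category together with inverses
for horizontal and vertical morphisms and for squares in both directions. -/
structure DGS (Ob : Type u₁) (H : Ob → Ob → Type u₂) (V : Ob → Ob → Type u₃)
    (Sq : ∀ ⦃a b c d : Ob⦄, H a c → H b d → V a b → V c d → Type u₄) extends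
    DCS Ob H V Sq where
  hInv : ∀ {a b : Ob}, H a b → H b a
  vInv : ∀ {a b : Ob}, V a b → V b a
  hInvSq : ∀ {a b c d : Ob} {f : H a c} {g : H b d} {u : V a b} {w : V c d},
    Sq f g u w → Sq (hInv f) (hInv g) w u
  vInvSq : ∀ {a b c d : Ob} {f : H a c} {g : H b d} {u : V a b} {w : V c d},
    Sq f g u w → Sq g f (vInv u) (vInv w)

namespace DCS

variable {Ob : Type u₁} {H : Ob → Ob → Type u₂} {V : Ob → Ob → Type u₃}
  {Sq : ∀ ⦃a b c d : Ob⦄, H a c → H b d → V a b → V c d → Type u₄}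

/-- The axioms of a double category (associativity, identities, compatibility of
identity squares with compositions, and the interchange law).  Since the types of
squares depend on their boundaries, some equations are stated as `HEq`. -/
structure Lawful (D : DCS Ob H V Sq) : Prop where
  hAssoc : ∀ {a b c d : Ob} (f : H c d) (g : H b c) (h : H a b),
    D.hComp (D.hComp f g) h = D.hComp f (D.hComp g h)
  hIdLeft : ∀ {a b : Ob} (f : H a b), D.hComp (D.hId b) f = f
  hIdRight : ∀ {a b : Ob} (f : H a b), D.hComp f (D.hId a) = f
  vAssoc : ∀ {a b c d : Ob} (u : V c d) (v : V b c) (w : V a b),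
    D.vComp (D.vComp u v) w = D.vComp u (D.vComp v w)
  vIdLeft : ∀ {a b : Ob} (u : V a b), D.vComp (D.vId b) u = u
  vIdRight : ∀ {a b : Ob} (u : V a b), D.vComp u (D.vId a) = u
  sqHAssoc : ∀ {a b c d a' b' a'' b'' : Ob} {f : H a c} {g : H b d} {u : V a b} {w : V c d}
    {f' : H a' a} {g' : H b' b} {u' : V a' b'} {f'' : H a'' a'} {g'' : H b'' b'}
    {u'' : V a'' b''} (α : Sq f g u w) (β : Sq f' g' u' u) (γ : Sq f'' g'' u'' u'),
    HEq (D.hCompSq (D.hCompSq α β) γ) (D.hCompSq α (D.hCompSq β γ))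
  sqHIdLeft : ∀ {a b c d : Ob} {f : H a c} {g : H b d} {u : V a b} {w : V c d}
    (α : Sq f g u w), HEq (D.hCompSq (D.idSqH w) α) α
  sqHIdRight : ∀ {a b c d : Ob} {f : H a c} {g : H b d} {u : V a b} {w : V c d}
    (α : Sq f g u w), HEq (D.hCompSq α (D.idSqH u)) α
  sqVAssoc : ∀ {a b c d a₀ c₀ a₁ c₁ : Ob} {f : H a c} {g : H b d} {u : V a b} {w : V c d}
    {f₀ : H a₀ c₀} {u₀ : V a₀ a} {w₀ : V c₀ c} {f₁ : H a₁ c₁} {u₁ : V a₁ a₀} {w₁ : V c₁ c₀}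
    (α : Sq f g u w) (β : Sq f₀ f u₀ w₀) (γ : Sq f₁ f₀ u₁ w₁),
    HEq (D.vCompSq (D.vCompSq α β) γ) (D.vCompSq α (D.vCompSq β γ))
  sqVIdLeft : ∀ {a b c d : Ob} {f : H a c} {g : H b d} {u : V a b} {w : V c d}
    (α : Sq f g u w), HEq (D.vCompSq (D.idSqV g) α) α
  sqVIdRight : ∀ {a b c d : Ob} {f : H a c} {g : H b d} {u : V a b} {w : V c d}
    (α : Sq f g u w), HEq (D.vCompSq α (D.idSqV f)) α
  idSqDiag : ∀ a : Ob, D.idSqH (D.vId a) = D.idSqV (D.hId a)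
  idSqVComp : ∀ {a a' c : Ob} (f : H a c) (f' : H a' a),
    D.idSqV (D.hComp f f') = D.hCompSq (D.idSqV f) (D.idSqV f')
  idSqHComp : ∀ {a a₀ b : Ob} (u : V a b) (u₀ : V a₀ a),
    D.idSqH (D.vComp u u₀) = D.vCompSq (D.idSqH u) (D.idSqH u₀)
  interchange : ∀ {a b c d a' b' a₀ c₀ a₀' : Ob}
    {f : H a c} {g : H b d} {u : V a b} {w : V c d}
    {f' : H a' a} {g' : H b' b} {u' : V a' b'}
    {f₀ : H a₀ c₀} {u₀ : V a₀ a} {w₀ : V c₀ c}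
    {f₀' : H a₀' a₀} {u₀' : V a₀' a'} -- bottom-right square with top edge f'
    (α : Sq f g u w) (β : Sq f' g' u' u) (γ : Sq f₀ f u₀ w₀) (δ : Sq f₀' f' u₀' u₀),
    D.vCompSq (D.hCompSq α β) (D.hCompSq γ δ) =
      D.hCompSq (D.vCompSq α γ) (D.vCompSq β δ)

/-- The *filling condition*: for every horizontal morphism `g` (the prospective
vertical target) and every vertical morphism `u` (the prospective horizontal source)
with `s^h g = t^v u`, there is a square with horizontal source `u` and vertical
target `g`. -/
def Filling (_ : DCS Ob H V Sq) : Prop :=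
  ∀ {a b d : Ob} (g : H b d) (u : V a b),
    ∃ (c : Ob) (f : H a c) (w : V c d), Nonempty (Sq f g u w)

end DCS

namespace DGS

variable {Ob : Type u₁} {H : Ob → Ob → Type u₂} {V : Ob → Ob → Type u₃}
  {Sq : ∀ ⦃a b c d : Ob⦄, H a c → H b d → V a b → V c d → Type u₄}

/-- The axioms of a double groupoid: a lawful double category in which the given
inversion operations really are two-sided inverses, for morphisms and for squares. -/
structure Lawful (D : DGS Ob H V Sq) : Prop where
  toLawfulDCS : D.toDCS.Lawful
  hInvLeft : ∀ {a b : Ob} (f : H a b), D.hComp (D.hInv f) f = D.hId a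
  hInvRight : ∀ {a b : Ob} (f : H a b), D.hComp f (D.hInv f) = D.hId b
  vInvLeft : ∀ {a b : Ob} (u : V a b), D.vComp (D.vInv u) u = D.vId a
  vInvRight : ∀ {a b : Ob} (u : V a b), D.vComp u (D.vInv u) = D.vId b
  sqHInvRight : ∀ {a b c d : Ob} {f : H a c} {g : H b d} {u : V a b} {w : V c d}
    (α : Sq f g u w), HEq (D.hCompSq α (D.hInvSq α)) (D.idSqH w)
  sqHInvLeft : ∀ {a b c d : Ob} {f : H a c} {g : H b d} {u : V a b} {w : V c d}
    (α : Sq f g u w), HEq (D.hCompSq (D.hInvSq α) α) (D.idSqH u)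
  sqVInvRight : ∀ {a b c d : Ob} {f : H a c} {g : H b d} {u : V a b} {w : V c d}
    (α : Sq f g u w), HEq (D.vCompSq α (D.vInvSq α)) (D.idSqV g)
  sqVInvLeft : ∀ {a b c d : Ob} {f : H a c} {g : H b d} {u : V a b} {w : V c d}
    (α : Sq f g u w), HEq (D.vCompSq (D.vInvSq α) α) (D.idSqV f)

end DGS

section HomotopyGroupsOfDoubleGroupoids

variable {Ob : Type u₁} {H : Ob → Ob → Type u₂} {V : Ob → Ob → Type u₃}
  {Sq : ∀ ⦃a b c d : Ob⦄, H a c → H b d → V a b → V c d → Type u₄}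


/-- Two objects `a, b` of a double groupoid are *connected* when there is a pair
`(g, u)` consisting of a horizontal morphism `g` and a vertical morphism `u` with
`s^h g = t^v u`, `t^h g = b` and `s^v u = a`. -/
def DCS.Connected (_ : DCS Ob H V Sq) (a b : Ob) : Prop :=
  ∃ x : Ob, Nonempty (H x b) ∧ Nonempty (V a x)

/-- `π₀` of a double groupoid: connectedness classes of objects. -/
def DCS.Pi0 (D : DCS Ob H V Sq) : Type u₁ := Quot D.Connected

/-- Representatives for `π₁(G, a)`: pairs `(g, u)` with `g` a horizontal morphism,
`u` a vertical morphism, `t^h g = a = s^v u` and `s^h g = t^v u`. -/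
def DCS.Pi1Rep (_ : DCS Ob H V Sq) (a : Ob) : Type (max u₁ u₂ u₃) :=
  Σ x : Ob, H x a × V a x

/-- The relation `(g, u) ∼ (g', u')` on `π₁`-representatives: there exist two squares
with the same horizontal target `w` and the same vertical source `f`, with horizontal
sources `u` resp. `u'`, and vertical targets `g` resp. `g'`. -/
def DCS.Pi1Rel (D : DCS Ob H V Sq) (a : Ob) (p q : D.Pi1Rep a) : Prop :=
  ∃ (c : Ob) (f : H a c) (w : V c a),
    Nonempty (Sq f p.2.1 p.2.2 w) ∧ Nonempty (Sq f q.2.1 q.2.2 w)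

/-- `π₁(G, a)` as a set: classes of pairs `(g, u)` under the above relation. -/
def DCS.Pi1 (D : DCS Ob H V Sq) (a : Ob) : Type (max u₁ u₂ u₃) :=
  Quot (D.Pi1Rel a)

/-- The carrier of `π₂(G, a)`: squares all of whose boundary edges are identities
at `a`. -/
def DCS.Pi2 (D : DCS Ob H V Sq) (a : Ob) : Type u₄ :=
  Sq (D.hId a) (D.hId a) (D.vId a) (D.vId a)

/-- The specification of the product on `π₁(G, a)`:
`[g₁, u₁] ∘ [g₂, u₂] = [g₁ ∘ₕ g, u ∘ᵥ u₂]`, where `γ` is any square with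
`s^v γ = g₂` and `t^h γ = u₁`, `g = t^v γ` and `u = s^h γ`. -/
def DCS.Pi1MulSpec (D : DCS Ob H V Sq) (a : Ob) (mul : D.Pi1 a → D.Pi1 a → D.Pi1 a) : Prop :=
  ∀ (x₁ : Ob) (g₁ : H x₁ a) (u₁ : V a x₁) (x₂ : Ob) (g₂ : H x₂ a) (u₂ : V a x₂)
    (b : Ob) (g : H b x₁) (u : V x₂ b) (_ : Sq g₂ g u u₁),
    mul (Quot.mk _ ⟨x₁, g₁, u₁⟩) (Quot.mk _ ⟨x₂, g₂, u₂⟩) =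
      Quot.mk _ ⟨b, D.hComp g₁ g, D.vComp u u₂⟩

/-- The specification of inversion on `π₁(G, a)`:
`[g, u]⁻¹ = [t^v α, s^h α]` for any square `α` with `t^h α = u⁻¹ᵛ` and `s^v α = g⁻¹ʰ`. -/
def DGS.Pi1InvSpec (D : DGS Ob H V Sq) (a : Ob) (inv : D.toDCS.Pi1 a → D.toDCS.Pi1 a) : Prop :=
  ∀ (x : Ob) (g : H x a) (u : V a x) (b : Ob) (g' : H b a) (u' : V a b)
    (_ : Sq (D.hInv g) g' u' (D.vInv u)),
    inv (Quot.mk _ ⟨x, g, u⟩) = Quot.mk _ ⟨b, g', u'⟩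

end HomotopyGroupsOfDoubleGroupoids

/-! Reflexivity is the filling condition and symmetry is built into the relation. For
transitivity, let `α, α'` witness `(g, u) ∼ (g', u')` over `(f, w)` and `β, β'` witness
`(g', u') ∼ (g'', u'')` over `(f₁, w₁)`. The horizontal composite `β ∘ α'⁻¹ ∘ α`, with
`α'⁻¹` the horizontal inverse, has horizontal source `u`, horizontal target `w₁`, vertical
source `f₁ f⁻¹ f = f₁` and vertical target `g' g'⁻¹ g = g`, so together with `β'` it
witnesses `(g, u) ∼ (g'', u'')`. -/

namespace DCS

variable {Ob : Type u₁} {H : Ob → Ob → Type u₂} {V : Ob → Ob → Type u₃}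
  {Sq : ∀ ⦃a b c d : Ob⦄, H a c → H b d → V a b → V c d → Type u₄}
  {D : DCS Ob H V Sq}

theorem Filling.pi1Rel_refl (hfill : D.Filling) {a : Ob} (p : D.Pi1Rep a) :
    D.Pi1Rel a p p := by
  obtain ⟨c, f, w, hα⟩ := hfill p.2.1 p.2.2
  exact ⟨c, f, w, hα, hα⟩

theorem pi1Rel_symm {a : Ob} {p q : D.Pi1Rep a} (h : D.Pi1Rel a p q) : D.Pi1Rel a q p :=
  let ⟨c, f, w, hp, hq⟩ := h
  ⟨c, f, w, hq, hp⟩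

end DCS

namespace DGS.Lawful

variable {Ob : Type u₁} {H : Ob → Ob → Type u₂} {V : Ob → Ob → Type u₃}
  {Sq : ∀ ⦃a b c d : Ob⦄, H a c → H b d → V a b → V c d → Type u₄}
  {D : DGS Ob H V Sq}

theorem hComp_hInv_hComp (hD : D.Lawful) {a b c : Ob} (f₁ : H a c) (f : H a b) :
    D.hComp (D.hComp f₁ (D.hInv f)) f = f₁ := by
  rw [hD.toLawfulDCS.hAssoc, hD.hInvLeft, hD.toLawfulDCS.hIdRight]

theorem hComp_self_hInv_hComp (hD : D.Lawful) {a b c : Ob} (g : H b c) (h : H a c) :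
    D.hComp (D.hComp g (D.hInv g)) h = h := by
  rw [hD.hInvRight, hD.toLawfulDCS.hIdLeft]

theorem nonempty_sq_of_zigzag (hD : D.Lawful) {a b c d b' c₁ : Ob}
    {f : H a c} {g : H b d} {u : V a b} {w : V c d} {g' : H b' d} {u' : V a b'}
    {f₁ : H a c₁} {w₁ : V c₁ d}
    (α : Sq f g u w) (α' : Sq f g' u' w) (β : Sq f₁ g' u' w₁) :
    Nonempty (Sq f₁ g u w₁) := by
  have θ := D.hCompSq (D.hCompSq β (D.hInvSq α')) α
  rw [hD.hComp_hInv_hComp, hD.hComp_self_hInv_hComp] at θ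
  exact ⟨θ⟩

theorem pi1Rel_trans (hD : D.Lawful) {a : Ob} {p q r : D.toDCS.Pi1Rep a}
    (hpq : D.toDCS.Pi1Rel a p q) (hqr : D.toDCS.Pi1Rel a q r) : D.toDCS.Pi1Rel a p r := by
  obtain ⟨c, f, w, ⟨α⟩, ⟨α'⟩⟩ := hpq
  obtain ⟨c₁, f₁, w₁, ⟨β⟩, hβ'⟩ := hqr
  exact ⟨c₁, f₁, w₁, hD.nonempty_sq_of_zigzag α α' β, hβ'⟩

end DGS.Lawful

/-- For a double groupoid satisfying the filling condition and an
object `a`, the relation `(g, u) ∼ (g', u')` on the set `G(a)` of matching pairs —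
given by the existence of two squares with common horizontal target and common
vertical source, with horizontal sources `u`, `u'` and vertical targets `g`, `g'`
respectively — is an equivalence relation. -/
theorem pi1Rel_equivalence {Ob : Type u₁} {H : Ob → Ob → Type u₂} {V : Ob → Ob → Type u₃}
    {Sq : ∀ ⦃a b c d : Ob⦄, H a c → H b d → V a b → V c d → Type u₄}
    (D : DGS Ob H V Sq) (hD : D.Lawful) (hfill : D.toDCS.Filling) (a : Ob) :
    Equivalence (D.toDCS.Pi1Rel a) :=
  ⟨hfill.pi1Rel_refl, DCS.pi1Rel_symm, hD.pi1Rel_trans⟩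
end

section
/- Let G be a double groupoid satisfying the filling condition and a an object. The set π₁(G,a) of equivalence classes [g,u] of pairs in G(a), with product [g₁,u₁]∘[g₂,u₂] = [g₁∘_h g, u∘_v u₂] where γ is any square with s^v(γ) = g₂ and t^h(γ) = u₁, g = t^v(γ) and u = s^h(γ), is a group with identity [I^h a, I^v a] and inverse of [g,u] given by [t^v(α), s^h(α)] for any square α with t^h(α) = u^{-1_v} and s^v(α) = g^{-1_h}. -/
/-! ## Double categories and double groupoids (combinatorial formalization)

A double category is given by objects, horizontal morphisms `H a b` (from `a` to `b`),
vertical morphisms `V a b`, and squares `Sq f g u w` where `f : H a c` is the bottom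
(vertical-source) edge, `g : H b d` the top (vertical-target) edge, `u : V a b` the
horizontal-source edge and `w : V c d` the horizontal-target edge. -/

universe u₁ u₂ u₃ u₄

namespace Pi1Aux

variable {Ob : Type u₁} {H : Ob → Ob → Type u₂} {V : Ob → Ob → Type u₃}
  {Sq : ∀ ⦃a b c d : Ob⦄, H a c → H b d → V a b → V c d → Type u₄}

/-- Transport a square along equalities of its four boundary edges. -/
def castSq (_D : DCS Ob H V Sq) {a b c d : Ob} {f f' : H a c} {g g' : H b d}
    {u u' : V a b} {w w' : V c d}
    (hf : f = f') (hg : g = g') (hu : u = u') (hw : w = w') (α : Sq f g u w) :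
    Sq f' g' u' w' := by
  subst hf; subst hg; subst hu; subst hw; exact α

variable {D : DGS Ob H V Sq}

section EdgeLemmas

lemma hInv_hInv (hD : D.Lawful) {a b : Ob} (f : H a b) : D.hInv (D.hInv f) = f := by
  have L := hD.toLawfulDCS
  calc D.hInv (D.hInv f)
      = D.hComp (D.hInv (D.hInv f)) (D.hId a) := (L.hIdRight _).symm
    _ = D.hComp (D.hInv (D.hInv f)) (D.hComp (D.hInv f) f) := by rw [hD.hInvLeft]
    _ = D.hComp (D.hComp (D.hInv (D.hInv f)) (D.hInv f)) f := (L.hAssoc _ _ _).symm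
    _ = D.hComp (D.hId b) f := by rw [hD.hInvLeft]
    _ = f := L.hIdLeft f

lemma vInv_vInv (hD : D.Lawful) {a b : Ob} (u : V a b) : D.vInv (D.vInv u) = u := by
  have L := hD.toLawfulDCS
  calc D.vInv (D.vInv u)
      = D.vComp (D.vInv (D.vInv u)) (D.vId a) := (L.vIdRight _).symm
    _ = D.vComp (D.vInv (D.vInv u)) (D.vComp (D.vInv u) u) := by rw [hD.vInvLeft]
    _ = D.vComp (D.vComp (D.vInv (D.vInv u)) (D.vInv u)) u := (L.vAssoc _ _ _).symm
    _ = D.vComp (D.vId b) u := by rw [hD.vInvLeft]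
    _ = u := L.vIdLeft u

lemma vInv_vId (hD : D.Lawful) (a : Ob) : D.vInv (D.vId a) = D.vId a := by
  have L := hD.toLawfulDCS
  calc D.vInv (D.vId a) = D.vComp (D.vInv (D.vId a)) (D.vId a) := (L.vIdRight _).symm
    _ = D.vId a := hD.vInvLeft _

lemma vInv_vComp (hD : D.Lawful) {a b c : Ob} (u : V b c) (v : V a b) :
    D.vInv (D.vComp u v) = D.vComp (D.vInv v) (D.vInv u) := by
  have L := hD.toLawfulDCS
  calc D.vInv (D.vComp u v)
      = D.vComp (D.vInv (D.vComp u v)) (D.vId c) := (L.vIdRight _).symm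
    _ = D.vComp (D.vInv (D.vComp u v))
          (D.vComp (D.vComp u v) (D.vComp (D.vInv v) (D.vInv u))) := by
        rw [L.vAssoc u v, ← L.vAssoc v (D.vInv v), hD.vInvRight, L.vIdLeft, hD.vInvRight]
    _ = D.vComp (D.vComp (D.vInv (D.vComp u v)) (D.vComp u v))
          (D.vComp (D.vInv v) (D.vInv u)) := (L.vAssoc _ _ _).symm
    _ = D.vComp (D.vInv v) (D.vInv u) := by rw [hD.vInvLeft, L.vIdLeft]

end EdgeLemmas

/-- The "difference-square" form of the relation on `π₁`-representatives. -/
def Diff (D : DGS Ob H V Sq) (a : Ob) (p q : D.toDCS.Pi1Rep a) : Prop :=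
  Nonempty (Sq q.2.1 p.2.1 (D.vComp p.2.2 (D.vInv q.2.2)) (D.vId a))

variable {a : Ob}

lemma rel_iff_diff (hD : D.Lawful) (hfill : D.toDCS.Filling) (p q : D.toDCS.Pi1Rep a) :
    D.toDCS.Pi1Rel a p q ↔ Diff D a p q := by
  have L := hD.toLawfulDCS
  obtain ⟨x, g, u⟩ := p
  obtain ⟨x', g', u'⟩ := q
  constructor
  · rintro ⟨c, f, w, ⟨α⟩, ⟨α'⟩⟩
    exact ⟨castSq D.toDCS rfl rfl rfl (hD.vInvRight w)
      (D.vCompSq α (D.vInvSq α'))⟩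
  · rintro ⟨β⟩
    obtain ⟨c, f, w, ⟨α'⟩⟩ := hfill g' u'
    refine ⟨c, f, w, ⟨?_⟩, ⟨α'⟩⟩
    refine castSq D.toDCS rfl rfl ?_ (L.vIdLeft w) (D.vCompSq β α')
    rw [L.vAssoc, hD.vInvLeft, L.vIdRight]

lemma diff_refl (hD : D.Lawful) (p : D.toDCS.Pi1Rep a) : Diff D a p p :=
  ⟨castSq D.toDCS rfl rfl (hD.vInvRight p.2.2).symm rfl (D.idSqV p.2.1)⟩

lemma diff_symm (hD : D.Lawful) {p q : D.toDCS.Pi1Rep a} (h : Diff D a p q) : Diff D a q p := by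
  obtain ⟨β⟩ := h
  refine ⟨castSq D.toDCS rfl rfl ?_ (vInv_vId hD a) (D.vInvSq β)⟩
  rw [vInv_vComp hD, vInv_vInv hD]

lemma diff_trans (hD : D.Lawful) {p q r : D.toDCS.Pi1Rep a} (h₁ : Diff D a p q) (h₂ : Diff D a q r) :
    Diff D a p r := by
  have L := hD.toLawfulDCS
  obtain ⟨β₁⟩ := h₁
  obtain ⟨β₂⟩ := h₂
  refine ⟨castSq D.toDCS rfl rfl ?_ (L.vIdLeft _) (D.vCompSq β₁ β₂)⟩
  rw [L.vAssoc, ← L.vAssoc (D.vInv q.2.2), hD.vInvLeft, L.vIdLeft]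

/-- Fill a square given its bottom edge and its horizontal target. -/
lemma fill_bt (hD : D.Lawful) (hfill : D.toDCS.Filling) {c d : Ob} {a' : Ob} (f : H a' c) (w : V c d) :
    Nonempty (Σ' (b : Ob) (g : H b d) (u : V a' b), Sq f g u w) := by
  obtain ⟨c', f', w', ⟨β⟩⟩ := hfill (D.hInv f) (D.vInv w)
  exact ⟨⟨c', D.hInv f', D.vInv w',
    castSq D.toDCS (hInv_hInv hD f) rfl rfl (vInv_vInv hD w)
      (D.hInvSq (D.vInvSq β))⟩⟩

noncomputable def fillBT (hD : D.Lawful) (hfill : D.toDCS.Filling) {c d : Ob} {a' : Ob} (f : H a' c) (w : V c d) :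
    Σ' (b : Ob) (g : H b d) (u : V a' b), Sq f g u w :=
  Classical.choice (fill_bt hD hfill f w)

/-- chosen multiplication on representatives -/
noncomputable def mulRep (hD : D.Lawful) (hfill : D.toDCS.Filling) (p q : D.toDCS.Pi1Rep a) : D.toDCS.Pi1Rep a :=
  let F := fillBT hD hfill q.2.1 p.2.2
  ⟨F.1, D.hComp p.2.1 F.2.1, D.vComp F.2.2.1 q.2.2⟩

/-- Key lemma: the product is compatible with the relation and independent of the
choice of filler. -/
lemma mul_diff (hD : D.Lawful) {x₁ x₁' x₂ x₂' b b' : Ob}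
    {g₁ : H x₁ a} {u₁ : V a x₁} {g₁' : H x₁' a} {u₁' : V a x₁'}
    {g₂ : H x₂ a} {u₂ : V a x₂} {g₂' : H x₂' a} {u₂' : V a x₂'}
    (h₁ : Diff D a ⟨x₁, g₁, u₁⟩ ⟨x₁', g₁', u₁'⟩)
    (h₂ : Diff D a ⟨x₂, g₂, u₂⟩ ⟨x₂', g₂', u₂'⟩)
    {g : H b x₁} {u : V x₂ b} (γ : Sq g₂ g u u₁)
    {g' : H b' x₁'} {u' : V x₂' b'} (γ' : Sq g₂' g' u' u₁') :
    Diff D a ⟨b, D.hComp g₁ g, D.vComp u u₂⟩ ⟨b', D.hComp g₁' g', D.vComp u' u₂'⟩ := by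
  have L := hD.toLawfulDCS
  obtain ⟨δ₁⟩ := h₁
  obtain ⟨δ₂⟩ := h₂
  -- vertical stack: γ over δ₂ over (vInvSq γ')
  have Y : Sq g' g (D.vComp (D.vComp u u₂) (D.vInv (D.vComp u' u₂')))
      (D.vComp u₁ (D.vInv u₁')) := by
    refine castSq D.toDCS rfl rfl ?_ ?_
      (D.vCompSq (D.vCompSq γ δ₂) (D.vInvSq γ'))
    · dsimp only
      rw [vInv_vComp hD, ← L.vAssoc u u₂, L.vAssoc (D.vComp u u₂)]
    · rw [L.vIdRight]
  exact ⟨D.hCompSq δ₁ Y⟩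

/-- Key lemma for inversion. -/
lemma inv_diff (hD : D.Lawful) {x x' b b' : Ob} {g : H x a} {u : V a x} {g₁ : H x' a} {u₁ : V a x'}
    (h : Diff D a ⟨x, g, u⟩ ⟨x', g₁, u₁⟩)
    {g' : H b a} {u' : V a b} (α : Sq (D.hInv g) g' u' (D.vInv u))
    {g₁' : H b' a} {u₁' : V a b'} (α₁ : Sq (D.hInv g₁) g₁' u₁' (D.vInv u₁)) :
    Diff D a ⟨b, g', u'⟩ ⟨b', g₁', u₁'⟩ := by
  have L := hD.toLawfulDCS
  obtain ⟨δ⟩ := h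
  have ε : Sq (D.hInv g₁) (D.hInv g) (D.vId a) (D.vComp u (D.vInv u₁)) := D.hInvSq δ
  refine ⟨castSq D.toDCS rfl rfl ?_ ?_
    (D.vCompSq (D.vCompSq α ε) (D.vInvSq α₁))⟩
  · rw [L.vIdRight]
  · rw [vInv_vInv hD, ← L.vAssoc (D.vInv u) u, hD.vInvLeft, L.vIdLeft, hD.vInvLeft]


/-- `mulRep` is related to any pair computed from an arbitrary filler. -/
lemma mulRep_rel (hD : D.Lawful) (hfill : D.toDCS.Filling) {x₁ x₂ b : Ob} (g₁ : H x₁ a) (u₁ : V a x₁) (g₂ : H x₂ a) (u₂ : V a x₂)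
    (g : H b x₁) (u : V x₂ b) (γ : Sq g₂ g u u₁) :
    D.toDCS.Pi1Rel a (mulRep hD hfill ⟨x₁, g₁, u₁⟩ ⟨x₂, g₂, u₂⟩)
      ⟨b, D.hComp g₁ g, D.vComp u u₂⟩ :=
  (rel_iff_diff hD hfill _ _).2
    (mul_diff hD (diff_refl hD _) (diff_refl hD _)
      (fillBT hD hfill g₂ u₁).2.2.2 γ)

noncomputable def invRep (hD : D.Lawful) (hfill : D.toDCS.Filling) (p : D.toDCS.Pi1Rep a) : D.toDCS.Pi1Rep a :=
  ⟨(fillBT hD hfill (D.hInv p.2.1) (D.vInv p.2.2)).1,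
   (fillBT hD hfill (D.hInv p.2.1) (D.vInv p.2.2)).2.1,
   (fillBT hD hfill (D.hInv p.2.1) (D.vInv p.2.2)).2.2.1⟩

noncomputable def invRep_sq (hD : D.Lawful) (hfill : D.toDCS.Filling) (p : D.toDCS.Pi1Rep a) :
    Sq (D.hInv p.2.1) (invRep hD hfill p).2.1 (invRep hD hfill p).2.2 (D.vInv p.2.2) :=
  (fillBT hD hfill (D.hInv p.2.1) (D.vInv p.2.2)).2.2.2

lemma invRep_rel (hD : D.Lawful) (hfill : D.toDCS.Filling) {x b : Ob} (g : H x a) (u : V a x) (g' : H b a) (u' : V a b)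
    (α : Sq (D.hInv g) g' u' (D.vInv u)) :
    D.toDCS.Pi1Rel a (invRep hD hfill ⟨x, g, u⟩) ⟨b, g', u'⟩ :=
  (rel_iff_diff hD hfill _ _).2
    (inv_diff hD (diff_refl hD _) (invRep_sq hD hfill ⟨x, g, u⟩) α)

end Pi1Aux


/-- For a double groupoid `G` satisfying the filling condition and an
object `a`, the set `π₁(G,a)` of classes `[g,u]` carries a group structure: the product
is given (independently of all choices) by `[g₁,u₁] ∘ [g₂,u₂] = [g₁ ∘ₕ g, u ∘ᵥ u₂]`
for any square `γ` with `s^v γ = g₂`, `t^h γ = u₁`, `g = t^v γ`, `u = s^h γ`; the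
identity is `[Iʰa, Iᵛa]`; and the inverse of `[g,u]` is `[t^v α, s^h α]` for any
square `α` with `t^h α = u⁻¹ᵛ` and `s^v α = g⁻¹ʰ`. -/
theorem pi1_group {Ob : Type u₁} {H : Ob → Ob → Type u₂} {V : Ob → Ob → Type u₃}
    {Sq : ∀ ⦃a b c d : Ob⦄, H a c → H b d → V a b → V c d → Type u₄}
    (D : DGS Ob H V Sq) (hD : D.Lawful) (hfill : D.toDCS.Filling) (a : Ob) :
    ∃ (mul : D.toDCS.Pi1 a → D.toDCS.Pi1 a → D.toDCS.Pi1 a)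
      (one : D.toDCS.Pi1 a) (inv : D.toDCS.Pi1 a → D.toDCS.Pi1 a),
      D.toDCS.Pi1MulSpec a mul ∧
      one = Quot.mk _ ⟨a, D.hId a, D.vId a⟩ ∧
      D.Pi1InvSpec a inv ∧
      (∀ p q r, mul (mul p q) r = mul p (mul q r)) ∧
      (∀ p, mul one p = p) ∧ (∀ p, mul p one = p) ∧
      (∀ p, mul (inv p) p = one) ∧ (∀ p, mul p (inv p) = one) := by
  classical
  have L := hD.toLawfulDCS
  let mul : D.toDCS.Pi1 a → D.toDCS.Pi1 a → D.toDCS.Pi1 a :=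
    Quot.lift₂ (fun p q => Quot.mk _ (Pi1Aux.mulRep hD hfill p q))
      (fun p q q' hq => by
        obtain ⟨x₁, g₁, u₁⟩ := p; obtain ⟨x₂, g₂, u₂⟩ := q; obtain ⟨x₂', g₂', u₂'⟩ := q'
        exact Quot.sound ((Pi1Aux.rel_iff_diff hD hfill _ _).2
          (Pi1Aux.mul_diff hD (Pi1Aux.diff_refl hD _)
            ((Pi1Aux.rel_iff_diff hD hfill _ _).1 hq)
            (Pi1Aux.fillBT hD hfill g₂ u₁).2.2.2 (Pi1Aux.fillBT hD hfill g₂' u₁).2.2.2)))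
      (fun p p' q hp => by
        obtain ⟨x₁, g₁, u₁⟩ := p; obtain ⟨x₁', g₁', u₁'⟩ := p'; obtain ⟨x₂, g₂, u₂⟩ := q
        exact Quot.sound ((Pi1Aux.rel_iff_diff hD hfill _ _).2
          (Pi1Aux.mul_diff hD ((Pi1Aux.rel_iff_diff hD hfill _ _).1 hp)
            (Pi1Aux.diff_refl hD _)
            (Pi1Aux.fillBT hD hfill g₂ u₁).2.2.2 (Pi1Aux.fillBT hD hfill g₂ u₁').2.2.2)))
  let inv : D.toDCS.Pi1 a → D.toDCS.Pi1 a :=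
    Quot.lift (fun p => Quot.mk _ (Pi1Aux.invRep hD hfill p))
      (fun p p' hp => by
        obtain ⟨x, g, u⟩ := p; obtain ⟨x', g', u'⟩ := p'
        exact Quot.sound ((Pi1Aux.rel_iff_diff hD hfill _ _).2
          (Pi1Aux.inv_diff hD ((Pi1Aux.rel_iff_diff hD hfill _ _).1 hp)
            (Pi1Aux.invRep_sq hD hfill ⟨x, g, u⟩) (Pi1Aux.invRep_sq hD hfill ⟨x', g', u'⟩))))
  have hspec : D.toDCS.Pi1MulSpec a mul := by
    intro x₁ g₁ u₁ x₂ g₂ u₂ b g u γ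
    exact Quot.sound (Pi1Aux.mulRep_rel hD hfill g₁ u₁ g₂ u₂ g u γ)
  have hinvspec : D.Pi1InvSpec a inv := by
    intro x g u b g' u' α
    exact Quot.sound (Pi1Aux.invRep_rel hD hfill g u g' u' α)
  refine ⟨mul, Quot.mk _ ⟨a, D.hId a, D.vId a⟩, inv, hspec, rfl, hinvspec, ?_, ?_, ?_, ?_, ?_⟩
  · -- associativity
    intro p q r
    obtain ⟨⟨x₁, g₁, u₁⟩, rfl⟩ := Quot.exists_rep p
    obtain ⟨⟨x₂, g₂, u₂⟩, rfl⟩ := Quot.exists_rep q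
    obtain ⟨⟨x₃, g₃, u₃⟩, rfl⟩ := Quot.exists_rep r
    obtain ⟨⟨b₁, g, u, γ⟩⟩ := Pi1Aux.fill_bt hD hfill g₂ u₁
    obtain ⟨⟨b₂, h, w, δ⟩⟩ := Pi1Aux.fill_bt hD hfill g₃ u₂
    obtain ⟨⟨b₃, h', u'', Y⟩⟩ := Pi1Aux.fill_bt hD hfill h u
    have e1 := hspec x₁ g₁ u₁ x₂ g₂ u₂ b₁ g u γ
    have e2 := hspec b₁ (D.hComp g₁ g) (D.vComp u u₂) x₃ g₃ u₃ b₃ h' (D.vComp u'' w)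
      (D.vCompSq Y δ)
    have e3 := hspec x₂ g₂ u₂ x₃ g₃ u₃ b₂ h w δ
    have e4 := hspec x₁ g₁ u₁ b₂ (D.hComp g₂ h) (D.vComp w u₃) b₃ (D.hComp g h') u''
      (D.hCompSq γ Y)
    rw [e1, e2, e3, e4, L.hAssoc, L.vAssoc]
  · -- left identity
    intro p
    obtain ⟨⟨x, g, u⟩, rfl⟩ := Quot.exists_rep p
    have e := hspec a (D.hId a) (D.vId a) x g u x g (D.vId x) (D.idSqV g)
    rw [e, L.hIdLeft, L.vIdLeft]
  · -- right identity
    intro p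
    obtain ⟨⟨x, g, u⟩, rfl⟩ := Quot.exists_rep p
    have e := hspec x g u a (D.hId a) (D.vId a) x (D.hId x) u (D.idSqH u)
    rw [e, L.hIdRight, L.vIdRight]
  · -- left inverse
    intro p
    obtain ⟨⟨x, g, u⟩, rfl⟩ := Quot.exists_rep p
    obtain ⟨⟨b, g', u', α⟩⟩ := Pi1Aux.fill_bt hD hfill (D.hInv g) (D.vInv u)
    have hi := hinvspec x g u b g' u' α
    have γ : Sq g (D.hInv g') (D.vInv u) u' :=
      Pi1Aux.castSq D.toDCS (Pi1Aux.hInv_hInv hD g) rfl rfl rfl (D.hInvSq α)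
    have e := hspec b g' u' x g u a (D.hInv g') (D.vInv u) γ
    rw [hi, e, hD.hInvRight, hD.vInvLeft]
  · -- right inverse
    intro p
    obtain ⟨⟨x, g, u⟩, rfl⟩ := Quot.exists_rep p
    obtain ⟨⟨b, g', u', α⟩⟩ := Pi1Aux.fill_bt hD hfill (D.hInv g) (D.vInv u)
    have hi := hinvspec x g u b g' u' α
    have γ : Sq g' (D.hInv g) (D.vInv u') u :=
      Pi1Aux.castSq D.toDCS rfl rfl rfl (Pi1Aux.vInv_vInv hD u) (D.vInvSq α)
    have e := hspec x g u b g' u' a (D.hInv g) (D.vInv u') γ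
    rw [hi, e, hD.hInvRight, hD.vInvLeft]
end
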